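/- Let L ⊆ S_n be a linear subspace, c ∈ S_n, 0 < k and 0 ≤ l < n−k. Assume: (1) the subproblem π̄_k(K_n,L,c) is weakly feasible, i.e. π̄_k(L+c) contains a positive semidefinite matrix but no positive definite matrix; and (2) every positive semidefinite matrix in π̄_k(L+c) has the block form [[A, 0],[0, 0]] with A an l×l positive semidefinite matrix. If there is no x ∈ L+c all of whose entries outside the upper-left (k+l)×(k+l) block vanish, then (L+c) ∩ K_n = ∅, i.e. (K_n,L,c) is infeasible. -/

import Mathlib

/-!
If `x ∈ L + c` is positive semidefinite, then `π̄_k(x)` is a positive semidefinite point of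
`π̄_k(L + c)`, so by the face assumption its diagonal vanishes from index `l` on; that is, the
diagonal of `x` vanishes from index `k + l` on. In a positive semidefinite matrix a zero
diagonal entry kills its whole row and column, so `x` is supported on the upper-left
`(k + l) × (k + l)` block, which is excluded.
-/

open Matrix

attribute [local instance] Matrix.frobeniusNormedAddCommGroup

noncomputable section

abbrev MS (n : ℕ) := Matrix (Fin n) (Fin n) ℝ

def affSet {n : ℕ} (L : Submodule ℝ (MS n)) (c : MS n) : Set (MS n) :=
  {x | ∃ l ∈ L, x = l + c}

/-- The principal submatrix of `x` with rows and columns in `[a, b)`; for `a = j`,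
`b = n` this is `π̄_j(x)`, the lower-right `(n−j)×(n−j)` principal submatrix, and for
`a = 0`, `b = j` it is `π_j(x)`, the upper-left `j×j` principal submatrix. -/
def blk (n a b : ℕ) (x : MS n) : Matrix (Fin (b - a)) (Fin (b - a)) ℝ :=
  fun i j => if h : a + i.1 < n ∧ a + j.1 < n then x ⟨a + i.1, h.1⟩ ⟨a + j.1, h.2⟩ else 0

namespace Matrix.PosSemidef

open scoped ComplexOrder

variable {m 𝕜 : Type*} [Fintype m] [RCLike 𝕜] {A : Matrix m m 𝕜}

/-- `A j j = eⱼ⋆ A eⱼ`, and for positive semidefinite `A` a vanishing quadratic form forces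
`A eⱼ = 0`. -/
lemma apply_eq_zero_of_diag_eq_zero_right (hA : A.PosSemidef) {j : m} (hj : A j j = 0) (i : m) :
    A i j = 0 := by
  classical
  have hcol : A *ᵥ Pi.single j 1 = 0 :=
    (hA.dotProduct_mulVec_zero_iff _).mp (by simpa [mulVec_single_one] using hj)
  simpa [mulVec_single_one] using congrFun hcol i

lemma apply_eq_zero_of_diag_eq_zero_left (hA : A.PosSemidef) {i : m} (hi : A i i = 0) (j : m) :
    A i j = 0 := by
  rw [← hA.1.apply i j, hA.apply_eq_zero_of_diag_eq_zero_right hi j, star_zero]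

end Matrix.PosSemidef

lemma blk_apply_sub {n a : ℕ} (x : MS n) {i j : Fin n} (hi : a ≤ i.1) (hj : a ≤ j.1) :
    blk n a n x ⟨i.1 - a, by omega⟩ ⟨j.1 - a, by omega⟩ = x i j := by
  have hi' : a + (i.1 - a) = i.1 := by omega
  have hj' : a + (j.1 - a) = j.1 := by omega
  simp [blk, hi', hj']

lemma blk_eq_submatrix {n a : ℕ} (x : MS n) :
    blk n a n x = x.submatrix (fun i => ⟨a + i.1, by omega⟩) (fun j => ⟨a + j.1, by omega⟩) := by
  ext i j
  simp [blk, show a + i.1 < n by omega, show a + j.1 < n by omega]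

lemma Matrix.PosSemidef.blk_tail {n a : ℕ} {x : MS n} (hx : x.PosSemidef) :
    (blk n a n x).PosSemidef := by
  rw [blk_eq_submatrix]
  exact hx.submatrix _

lemma Matrix.PosSemidef.apply_eq_zero_of_diag_eq_zero_from {n p : ℕ} {x : MS n}
    (hx : x.PosSemidef) (hdiag : ∀ a : Fin n, p ≤ a.1 → x a a = 0) (i j : Fin n)
    (hij : p ≤ i.1 ∨ p ≤ j.1) : x i j = 0 := by
  rcases hij with hi | hj
  · exact hx.apply_eq_zero_of_diag_eq_zero_left (hdiag i hi) j
  · exact hx.apply_eq_zero_of_diag_eq_zero_right (hdiag j hj) i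

theorem stmt17_general (n k l : ℕ)
    (L : Submodule ℝ (MS n)) (c : MS n)
    (hface : ∀ u ∈ blk n k n '' affSet L c, u.PosSemidef →
      (blk (n - k) 0 l u).PosSemidef ∧
        ∀ i j : Fin (n - k), (l ≤ i.1 ∨ l ≤ j.1) → u i j = 0)
    (hE : ¬ ∃ x ∈ affSet L c,
      ∀ i j : Fin n, (k + l ≤ i.1 ∨ k + l ≤ j.1) → x i j = 0) :
    ¬ ∃ x ∈ affSet L c, x.PosSemidef := by
  rintro ⟨x, hx, hpsd⟩
  have htail := (hface _ ⟨x, hx, rfl⟩ hpsd.blk_tail).2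
  have hdiag : ∀ a : Fin n, k + l ≤ a.1 → x a a = 0 := fun a ha => by
    rw [← blk_apply_sub x (by omega : k ≤ a.1) (by omega : k ≤ a.1)]
    exact htail _ _ (Or.inl (by simp only; omega))
  exact hE ⟨x, hx, hpsd.apply_eq_zero_of_diag_eq_zero_from hdiag⟩

/-- Assume: (1) the subproblem `π̄_k(K_n, L, c)`, with affine feasible set
`π̄_k(L+c)`, is weakly feasible (contains a positive semidefinite but no positive
definite matrix); (2) every positive semidefinite matrix in `π̄_k(L+c)` has the block
form `[[A, 0], [0, 0]]` with `A` an `l×l` positive semidefinite matrix. If no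
`x ∈ L + c` has all entries outside the upper-left `(k+l)×(k+l)` block vanishing,
then `(L+c) ∩ K_n = ∅`, i.e. `(K_n, L, c)` is infeasible. -/
theorem stmt17 (n k l : ℕ) (hk : 0 < k) (hl : k + l < n)
    (L : Submodule ℝ (MS n)) (hL : ∀ y ∈ L, y.IsSymm) (c : MS n) (hc : c.IsSymm)
    (hfeas : ∃ u ∈ blk n k n '' affSet L c, u.PosSemidef)
    (hnotstrict : ¬ ∃ u ∈ blk n k n '' affSet L c, u.PosDef)
    (hface : ∀ u ∈ blk n k n '' affSet L c, u.PosSemidef →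
      (blk (n - k) 0 l u).PosSemidef ∧
        ∀ i j : Fin (n - k), (l ≤ i.1 ∨ l ≤ j.1) → u i j = 0)
    (hE : ¬ ∃ x ∈ affSet L c,
      ∀ i j : Fin n, (k + l ≤ i.1 ∨ k + l ≤ j.1) → x i j = 0) :
    ¬ ∃ x ∈ affSet L c, x.PosSemidef :=
  stmt17_general n k l L c hface hE
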